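/- Let (J,γ) be a metrised real Jordan algebra of finite dimension n such that the multiplication operator L_x is nilpotent for every x ∈ J. Define F : J → ℝ by F(x) = Σ_{k=2}^{n+1} ((-1)^k / k) γ(x, x^{k-1}) (a polynomial function). Then for every x ∈ J the Hessian D²F(x) is a nondegenerate symmetric bilinear form whose matrix with respect to any fixed basis of J has the same determinant as the matrix of γ with respect to that basis; in particular det D²F(x) is constant in x. -/

import Mathlib

open scoped BigOperators

/-- Powers in a (Jordan) algebra: `x¹ = x`, `x^{k+1} = x ∙ x^k`, i.e. `x^k = L_x^{k-1} x`.
(The value at `k = 0` is junk.) -/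
noncomputable def jpow {J : Type*} [AddCommGroup J] [Module ℝ J]
    (mul : J →ₗ[ℝ] J →ₗ[ℝ] J) (x : J) (k : ℕ) : J :=
  ((mul x) ^ (k - 1)) x

/-!
Commutativity and the Jordan identity make all the operators `L_{x^k}` commute: the linearised
Jordan identity gives a recursion for the commutators `⁅L_{x^a}, L_{x^b}⁆` with `a + b = s`
that forces them to vanish. Hence the derivative `D_m(x)` of `y ↦ y^{m+1}`, given by
`D_{m+1} = L_x D_m + L_{x^{m+1}}`, is `γ`-self-adjoint, nilpotent for `m ≥ 1`, and satisfies
`D_m(x) x = (m+1) x^{m+1}`. It follows that `dF(x) = Σ_m (-1)^m γ(x^{m+1}, ·)` and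
`D²F(x)(u, v) = γ(T u, v)` with `T = Σ_m (-1)^m D_m(x) = 1 + (nilpotent)`, so `det T = 1`, and
the Gram matrix of `D²F(x)` is `Tᵀ` times that of `γ`.
-/

lemma LinearMap.det_eq_one_of_isNilpotent_sub_one {K M : Type*} [Field K] [AddCommGroup M]
    [Module K M] [FiniteDimensional K M] {f : Module.End K M} (hf : IsNilpotent (f - 1)) :
    LinearMap.det f = 1 := by
  have h := LinearMap.eval_charpoly (f - 1) (-1)
  have hneg : algebraMap K (Module.End K M) (-1) - (f - 1) = (-1 : K) • f := by
    rw [map_neg, map_one, neg_one_smul]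
    abel
  rw [hf.charpoly_eq_X_pow_finrank, hneg, LinearMap.det_smul, Polynomial.eval_pow,
    Polynomial.eval_X] at h
  exact (mul_eq_left₀ (pow_ne_zero _ (neg_ne_zero.mpr one_ne_zero))).mp h.symm

lemma LinearMap.det_of_comp_apply_basis {R M ι : Type*} [CommRing R] [AddCommGroup M] [Module R M]
    [Fintype ι] [DecidableEq ι] (B : M →ₗ[R] M →ₗ[R] R) (T : Module.End R M)
    (b : Module.Basis ι R M) :
    (Matrix.of fun i j => B (T (b i)) (b j)).det =
      LinearMap.det T * (Matrix.of fun i j => B (b i) (b j)).det := by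
  have hmat (B : M →ₗ[R] M →ₗ[R] R) :
      LinearMap.toMatrix₂ b b B = Matrix.of fun i j => B (b i) (b j) := by
    ext
    simp
  rw [← hmat, ← LinearMap.det_toMatrix b, ← Matrix.det_transpose (LinearMap.toMatrix b b T),
    ← Matrix.det_mul, ← LinearMap.toMatrix₂_comp, hmat]
  rfl

namespace MetrisedJordan

section Algebra

variable {J : Type*} [AddCommGroup J] [Module ℝ J] {mul : J →ₗ[ℝ] J →ₗ[ℝ] J}

structure IsJordanMul (mul : J →ₗ[ℝ] J →ₗ[ℝ] J) : Prop where
  comm : ∀ u v, mul u v = mul v u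
  jordan : ∀ u v, mul u (mul (mul u u) v) = mul (mul u u) (mul u v)

@[simp] lemma jpow_one (x : J) : jpow mul x 1 = x := rfl

lemma jpow_add_two (x : J) (m : ℕ) : jpow mul x (m + 2) = mul x (jpow mul x (m + 1)) := by
  simp [jpow, pow_succ', Module.End.mul_apply]

lemma IsJordanMul.lie_lmul_lmul_add_add_eq_zero (hJ : IsJordanMul mul) (u v w : J) :
    ⁅mul u, mul (mul v w)⁆ + ⁅mul v, mul (mul w u)⁆ + ⁅mul w, mul (mul u v)⁆ = 0 := by
  have hcube (a : J) : (mul a : Module.End ℝ J) * mul (mul a a) - mul (mul a a) * mul a = 0 :=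
    sub_eq_zero.mpr (LinearMap.ext (hJ.jordan a))
  have h := hcube (u + v + w)
  have huv := hcube (u + v)
  have huw := hcube (u + w)
  have hvw := hcube (v + w)
  simp only [map_add, LinearMap.add_apply, add_mul, mul_add, hJ.comm v u, hJ.comm w u,
    hJ.comm w v] at h huv huw hvw
  have h2 : (2 : ℝ) • (⁅mul u, mul (mul v w)⁆ + ⁅mul v, mul (mul w u)⁆ + ⁅mul w, mul (mul u v)⁆)
      = 0 := by
    simp only [Ring.lie_def, hJ.comm w u]
    linear_combination (norm := module) h - huv - huw - hvw + hcube u + hcube v + hcube w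
  exact (smul_eq_zero.mp h2).resolve_left two_ne_zero

lemma IsJordanMul.mul_jpow_jpow_of_commute (hJ : IsJordanMul mul) (x : J) {s : ℕ}
    (hc : ∀ a < s, Commute (mul (jpow mul x (a + 1))) (mul x))
    (hm : ∀ a b, a + b + 1 = s →
      mul (jpow mul x (a + 1)) (jpow mul x (b + 1)) = jpow mul x (s + 1))
    (a b : ℕ) (hab : a + b = s) :
    mul (jpow mul x (a + 1)) (jpow mul x (b + 1)) = jpow mul x (s + 2) := by
  cases b with
  | zero =>
    obtain rfl : a = s := hab
    rw [jpow_one, hJ.comm, ← jpow_add_two]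
  | succ c =>
    rw [jpow_add_two, ← Module.End.mul_apply, (hc a (by omega)).eq, Module.End.mul_apply,
      hm a c (by omega), ← jpow_add_two]

lemma IsJordanMul.lie_lmul_jpow_eq_zero_of_mul_jpow (hJ : IsJordanMul mul) (x : J) {s : ℕ}
    (hm : ∀ a b, a + b + 1 = s →
      mul (jpow mul x (a + 1)) (jpow mul x (b + 1)) = jpow mul x (s + 1))
    (a b : ℕ) (hab : a + b = s) :
    ⁅mul (jpow mul x (a + 1)), mul (jpow mul x (b + 1))⁆ = 0 := by
  set K : ℕ → ℕ → Module.End ℝ J :=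
    fun i j => ⁅mul (jpow mul x (i + 1)), mul (jpow mul x (j + 1))⁆
  -- `hstep` makes `K i (s - i)` grow linearly in `i`, while skew-symmetry swaps its two ends.
  have hskew (i j : ℕ) : K i j = -K j i := by simp only [K, Ring.lie_def, neg_sub]
  have hstep (i j : ℕ) (hij : i + j + 1 = s) : K (i + 1) j = K i (j + 1) + K 0 s := by
    have h := hJ.lie_lmul_lmul_add_add_eq_zero (jpow mul x (i + 1)) (jpow mul x (j + 1)) x
    rw [hJ.comm _ x, ← jpow_add_two, ← jpow_add_two, hm i j hij] at h
    have h' : K i (j + 1) + K j (i + 1) + K 0 s = 0 := h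
    rw [hskew (i + 1) j]
    linear_combination (norm := module) -h'
  have hlin (i j : ℕ) (hij : i + j = s) : K i j = (i + 1) • K 0 s := by
    induction i generalizing j with
    | zero => simp [← hij]
    | succ i ih => rw [hstep i j (by omega), ih (j + 1) (by omega), ← succ_nsmul]
  have hK : K 0 s = 0 := by
    have h := hlin s 0 (add_zero s)
    rw [hskew, neg_eq_iff_eq_neg] at h
    have h2 : ((s : ℝ) + 2) • K 0 s = 0 := by linear_combination (norm := module) h
    exact (smul_eq_zero.mp h2).resolve_left (by positivity)
  exact (hlin a b hab).trans (by rw [hK, smul_zero])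

lemma IsJordanMul.commute_lmul_jpow_and_mul_jpow (hJ : IsJordanMul mul) (x : J) (s : ℕ) :
    (∀ a b, a + b = s → Commute (mul (jpow mul x (a + 1))) (mul (jpow mul x (b + 1)))) ∧
    ∀ a b, a + b = s → mul (jpow mul x (a + 1)) (jpow mul x (b + 1)) = jpow mul x (s + 2) := by
  induction s using Nat.strong_induction_on with
  | _ s ih =>
  have hm (a b : ℕ) (h : a + b + 1 = s) :
      mul (jpow mul x (a + 1)) (jpow mul x (b + 1)) = jpow mul x (s + 1) := by
    rw [(ih (a + b) (by omega)).2 a b rfl, ← h]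
  have hc (a : ℕ) (h : a < s) : Commute (mul (jpow mul x (a + 1))) (mul x) :=
    (ih a h).1 a 0 (add_zero a)
  exact ⟨fun a b hab => commute_iff_lie_eq.mpr (hJ.lie_lmul_jpow_eq_zero_of_mul_jpow x hm a b hab),
    hJ.mul_jpow_jpow_of_commute x hc hm⟩

lemma IsJordanMul.commute_lmul_jpow (hJ : IsJordanMul mul) (x : J) (a b : ℕ) :
    Commute (mul (jpow mul x (a + 1))) (mul (jpow mul x (b + 1))) :=
  (hJ.commute_lmul_jpow_and_mul_jpow x (a + b)).1 a b rfl

variable (mul) in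
/-- The derivative of `y ↦ y ^ (m + 1)` at `x`, when `mul` is commutative. -/
noncomputable def jpowDeriv (x : J) : ℕ → Module.End ℝ J
  | 0 => 1
  | m + 1 => mul x * jpowDeriv x m + mul (jpow mul x (m + 1))

lemma IsJordanMul.jpowDeriv_apply_self (hJ : IsJordanMul mul) (x : J) (m : ℕ) :
    jpowDeriv mul x m x = (m + 1) • jpow mul x (m + 1) := by
  induction m with
  | zero => simp [jpowDeriv]
  | succ m ih =>
    rw [jpowDeriv, LinearMap.add_apply, Module.End.mul_apply, ih, map_nsmul, hJ.comm _ x,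
      ← jpow_add_two, ← succ_nsmul]

lemma IsJordanMul.commute_lmul_jpow_jpowDeriv (hJ : IsJordanMul mul) (x : J) (j m : ℕ) :
    Commute (mul (jpow mul x (j + 1))) (jpowDeriv mul x m) := by
  induction m with
  | zero => exact Commute.one_right _
  | succ m ih =>
    exact ((hJ.commute_lmul_jpow x j 0).mul_right ih).add_right (hJ.commute_lmul_jpow x j m)

lemma IsJordanMul.commute_lmul_jpowDeriv (hJ : IsJordanMul mul) (x : J) (m : ℕ) :
    Commute (mul x) (jpowDeriv mul x m) :=
  hJ.commute_lmul_jpow_jpowDeriv x 0 m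

lemma IsJordanMul.commute_jpowDeriv (hJ : IsJordanMul mul) (x : J) (m m' : ℕ) :
    Commute (jpowDeriv mul x m) (jpowDeriv mul x m') := by
  induction m with
  | zero => exact Commute.one_left _
  | succ m ih =>
    exact ((hJ.commute_lmul_jpowDeriv x m').mul_left ih).add_left
      (hJ.commute_lmul_jpow_jpowDeriv x m m')

lemma IsJordanMul.isNilpotent_jpowDeriv_succ (hJ : IsJordanMul mul)
    (hnil : ∀ y, IsNilpotent (mul y)) (x : J) (m : ℕ) :
    IsNilpotent (jpowDeriv mul x (m + 1)) :=
  Commute.isNilpotent_add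
    (((hJ.commute_lmul_jpow x 0 m).mul_left (hJ.commute_lmul_jpow_jpowDeriv x m m).symm))
    ((hJ.commute_lmul_jpowDeriv x m).isNilpotent_mul_right (hnil x)) (hnil _)

lemma IsJordanMul.isSelfAdjoint_lmul (hJ : IsJordanMul mul) {γ : J →ₗ[ℝ] J →ₗ[ℝ] ℝ}
    (htrace : ∀ u v w, γ (mul u v) w = γ u (mul v w)) (a : J) :
    γ.IsSelfAdjoint (mul a) := fun u v => by
  rw [hJ.comm, htrace]

lemma IsJordanMul.isSelfAdjoint_jpowDeriv (hJ : IsJordanMul mul) {γ : J →ₗ[ℝ] J →ₗ[ℝ] ℝ}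
    (htrace : ∀ u v w, γ (mul u v) w = γ u (mul v w)) (x : J) (m : ℕ) :
    γ.IsSelfAdjoint (jpowDeriv mul x m) := by
  induction m with
  | zero => exact LinearMap.isAdjointPair_one
  | succ m ih =>
    have h := (hJ.isSelfAdjoint_lmul htrace x).mul ih
    rw [← (hJ.commute_lmul_jpowDeriv x m).eq] at h
    exact γ.selfAdjointSubmodule.add_mem h (hJ.isSelfAdjoint_lmul htrace _)

end Algebra

section Potential

variable {J : Type*} [AddCommGroup J] [Module ℝ J] {mul : J →ₗ[ℝ] J →ₗ[ℝ] J}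
  {γ : J →ₗ[ℝ] J →ₗ[ℝ] ℝ}

variable (mul γ) in
noncomputable def potential (a : ℕ → ℝ) (N : ℕ) (x : J) : ℝ :=
  ∑ m ∈ Finset.range N, a m / (m + 2) * γ x (jpow mul x (m + 1))

variable (mul) in
noncomputable def hessianOp (a : ℕ → ℝ) (N : ℕ) (x : J) : Module.End ℝ J :=
  ∑ m ∈ Finset.range N, a m • jpowDeriv mul x m

lemma IsJordanMul.isSelfAdjoint_hessianOp (hJ : IsJordanMul mul)
    (htrace : ∀ u v w, γ (mul u v) w = γ u (mul v w)) (a : ℕ → ℝ) (N : ℕ) (x : J) :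
    γ.IsSelfAdjoint (hessianOp mul a N x) :=
  γ.selfAdjointSubmodule.sum_mem fun m _ =>
    γ.selfAdjointSubmodule.smul_mem (a m) (hJ.isSelfAdjoint_jpowDeriv htrace x m)

lemma IsJordanMul.isNilpotent_hessianOp_sub_one (hJ : IsJordanMul mul)
    (hnil : ∀ y, IsNilpotent (mul y)) {a : ℕ → ℝ} (ha : a 0 = 1) {N : ℕ} (hN : N ≠ 0) (x : J) :
    IsNilpotent (hessianOp mul a N x - 1) := by
  obtain ⟨N, rfl⟩ := Nat.exists_eq_succ_of_ne_zero hN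
  rw [hessianOp, Finset.sum_range_succ', ha, one_smul, jpowDeriv, add_sub_cancel_right]
  exact Commute.isNilpotent_sum (fun m _ => (hJ.isNilpotent_jpowDeriv_succ hnil x m).smul _)
    fun m m' _ _ => ((hJ.commute_jpowDeriv x _ _).smul_left _).smul_right _

lemma potential_neg_one_pow (N : ℕ) (x : J) :
    potential mul γ (fun m => (-1) ^ m) N x =
      ∑ k ∈ Finset.Icc 2 (N + 1), (-1 : ℝ) ^ k / k * γ x (jpow mul x (k - 1)) := by
  rw [potential, ← Finset.Ico_add_one_right_eq_Icc, Finset.sum_Ico_eq_sum_range,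
    show N + 1 + 1 - 2 = N by omega]
  refine Finset.sum_congr rfl fun m _ => ?_
  simp [pow_add, add_comm]

end Potential

section Analysis

variable {J : Type*} [NormedAddCommGroup J] [NormedSpace ℝ J] [FiniteDimensional ℝ J]
  {mul : J →ₗ[ℝ] J →ₗ[ℝ] J} {γ : J →ₗ[ℝ] J →ₗ[ℝ] ℝ}

lemma IsJordanMul.hasFDerivAt_jpow (hJ : IsJordanMul mul) (x : J) (m : ℕ) :
    HasFDerivAt (fun y => jpow mul y (m + 1))
      (LinearMap.toContinuousLinearMap (jpowDeriv mul x m)) x := by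
  induction m with
  | zero => exact hasFDerivAt_id x
  | succ m ih =>
    have h := mul.toContinuousBilinearMap.hasFDerivAt.clm_apply ih
    rw [show (fun y => jpow mul y (m + 1 + 1)) = _ from funext fun y => jpow_add_two y m]
    refine h.congr_fderiv (ContinuousLinearMap.ext fun v => ?_)
    simp [jpowDeriv, hJ.comm v]

lemma IsJordanMul.hasFDerivAt_apply_jpow (hJ : IsJordanMul mul) (hsymm : ∀ u v, γ u v = γ v u)
    (htrace : ∀ u v w, γ (mul u v) w = γ u (mul v w)) (x : J) (m : ℕ) :
    HasFDerivAt (fun y => γ y (jpow mul y (m + 1)))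
      (((m : ℝ) + 2) • γ.toContinuousBilinearMap (jpow mul x (m + 1))) x := by
  refine (γ.toContinuousBilinearMap.hasFDerivAt.clm_apply (hJ.hasFDerivAt_jpow x m)).congr_fderiv
    (ContinuousLinearMap.ext fun v => ?_)
  have hself : γ x (jpowDeriv mul x m v) = (m + 1) * γ (jpow mul x (m + 1)) v := by
    rw [← hJ.isSelfAdjoint_jpowDeriv htrace x m, hJ.jpowDeriv_apply_self, map_nsmul,
      LinearMap.smul_apply, nsmul_eq_mul]
    push_cast
    ring
  simp [hself, hsymm v]
  ring

lemma IsJordanMul.hasFDerivAt_potential (hJ : IsJordanMul mul) (hsymm : ∀ u v, γ u v = γ v u)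
    (htrace : ∀ u v w, γ (mul u v) w = γ u (mul v w)) (a : ℕ → ℝ) (N : ℕ) (x : J) :
    HasFDerivAt (potential mul γ a N)
      (∑ m ∈ Finset.range N, a m • γ.toContinuousBilinearMap (jpow mul x (m + 1))) x := by
  refine HasFDerivAt.fun_sum fun m _ =>
    ((hJ.hasFDerivAt_apply_jpow hsymm htrace x m).const_mul (a m / (m + 2))).congr_fderiv ?_
  rw [smul_smul, div_mul_cancel₀ _ (by positivity)]

lemma IsJordanMul.iteratedFDeriv_two_potential (hJ : IsJordanMul mul)
    (hsymm : ∀ u v, γ u v = γ v u) (htrace : ∀ u v w, γ (mul u v) w = γ u (mul v w))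
    (a : ℕ → ℝ) (N : ℕ) (x u v : J) :
    iteratedFDeriv ℝ 2 (potential mul γ a N) x ![u, v] = γ (hessianOp mul a N x u) v := by
  have hgrad : fderiv ℝ (potential mul γ a N) = fun y =>
      ∑ m ∈ Finset.range N, a m • γ.toContinuousBilinearMap (jpow mul y (m + 1)) :=
    funext fun y => (hJ.hasFDerivAt_potential hsymm htrace a N y).fderiv
  have hhess : HasFDerivAt (fderiv ℝ (potential mul γ a N))
      (∑ m ∈ Finset.range N, a m • γ.toContinuousBilinearMap.comp
        (LinearMap.toContinuousLinearMap (jpowDeriv mul x m))) x := by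
    rw [hgrad]
    exact HasFDerivAt.fun_sum fun m _ =>
      (γ.toContinuousBilinearMap.hasFDerivAt.comp x (hJ.hasFDerivAt_jpow x m)).const_smul (a m)
  rw [iteratedFDeriv_two_apply, hhess.fderiv]
  simp [hessianOp]

end Analysis

end MetrisedJordan

open MetrisedJordan in
theorem stmt_5 {n : ℕ}
    (mul : EuclideanSpace ℝ (Fin n) →ₗ[ℝ] EuclideanSpace ℝ (Fin n) →ₗ[ℝ] EuclideanSpace ℝ (Fin n))
    (γ : EuclideanSpace ℝ (Fin n) →ₗ[ℝ] EuclideanSpace ℝ (Fin n) →ₗ[ℝ] ℝ)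
    (hcomm : ∀ u v, mul u v = mul v u)
    (hjordan : ∀ u v, mul u (mul (mul u u) v) = mul (mul u u) (mul u v))
    (hsymm : ∀ u v, γ u v = γ v u)
    (hndγ : ∀ u, (∀ v, γ u v = 0) → u = 0)
    (htrace : ∀ u v w, γ (mul u v) w = γ u (mul v w))
    (hnil : ∀ x, IsNilpotent (mul x))
    (F : EuclideanSpace ℝ (Fin n) → ℝ)
    (hF : F = fun x => ∑ k ∈ Finset.Icc 2 (n + 1),
      ((-1 : ℝ)) ^ k / (k : ℝ) * γ x (jpow mul x (k - 1))) :
    ∀ x : EuclideanSpace ℝ (Fin n),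
      (∀ u, (∀ v, iteratedFDeriv ℝ 2 F x ![u, v] = 0) → u = 0) ∧
      (∀ u v, iteratedFDeriv ℝ 2 F x ![u, v] = iteratedFDeriv ℝ 2 F x ![v, u]) ∧
      ∀ (b : Module.Basis (Fin n) ℝ (EuclideanSpace ℝ (Fin n))),
        (Matrix.of fun i j => iteratedFDeriv ℝ 2 F x ![b i, b j]).det =
        (Matrix.of fun i j => γ (b i) (b j)).det := by
  intro x
  have hJ : IsJordanMul mul := ⟨hcomm, hjordan⟩
  obtain rfl : F = potential mul γ (fun m => (-1) ^ m) n :=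
    hF.trans (funext fun y => (potential_neg_one_pow n y).symm)
  set T := hessianOp mul (fun m => (-1) ^ m) n x
  have hHess (u v) : iteratedFDeriv ℝ 2 (potential mul γ (fun m => (-1) ^ m) n) x ![u, v] =
      γ (T u) v := hJ.iteratedFDeriv_two_potential hsymm htrace _ n x u v
  have hdet : LinearMap.det T = 1 := by
    refine LinearMap.det_eq_one_of_isNilpotent_sub_one ?_
    rcases eq_or_ne n 0 with rfl | hn
    · exact ⟨1, Subsingleton.elim _ _⟩
    · exact hJ.isNilpotent_hessianOp_sub_one hnil (pow_zero _) hn x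
  have hT : Function.Injective T :=
    ((Module.End.isUnit_iff T).mp
      ((LinearMap.isUnit_iff_isUnit_det T).mpr (hdet ▸ isUnit_one))).injective
  refine ⟨fun u hu => hT ?_, fun u v => ?_, fun b => ?_⟩
  · rw [map_zero]
    exact hndγ _ fun v => by rw [← hHess, hu]
  · rw [hHess, hHess, hJ.isSelfAdjoint_hessianOp htrace, hsymm]
  · simp only [hHess]
    rw [LinearMap.det_of_comp_apply_basis, hdet, one_mul]
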